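/- arXiv:math/0609065 — 2 statements merged into one kernel-verified Lean document; each statement's English description precedes it below -/
import Mathlib

section
/- Let Λ be a commutative noetherian ring, H a finitely generated Λ-module, R a Λ-subalgebra of End_Λ(H), and α ∈ Λ. Define R' = {y ∈ End_Λ(H) : ∃ k ≥ 0, ∃ z ∈ R, α^k y = α^m z} for a fixed m ≥ 0. Then R' is a Λ-subalgebra of End_Λ(H) containing R, and there exists N ≥ 0 such that α^N R' ⊆ R. -/
/-- With `Λ` commutative noetherian, `H` a f.g. `Λ`-module, `R` a
`Λ`-subalgebra of `End_Λ(H)`, `α ∈ Λ` and a fixed `m ≥ 0`, the set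
`R' = {y : ∃ k, ∃ z ∈ R, α^k • y = α^m • z}` is a `Λ`-subalgebra containing `R`,
and there is `N` with `α^N R' ⊆ R`. -/
theorem stmt1 (Λ : Type*) [CommRing Λ] [IsNoetherianRing Λ]
    (H : Type*) [AddCommGroup H] [Module Λ H] [Module.Finite Λ H]
    (R : Subalgebra Λ (Module.End Λ H)) (α : Λ) (m : ℕ) :
    ∃ R' : Subalgebra Λ (Module.End Λ H),
      (R' : Set (Module.End Λ H)) =
        {y : Module.End Λ H | ∃ k : ℕ, ∃ z ∈ R, α ^ k • y = α ^ m • z} ∧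
      R ≤ R' ∧ ∃ N : ℕ, ∀ y ∈ R', α ^ N • y ∈ R := by
  set E := Module.End Λ H
  refine ⟨{
    carrier := {y : E | ∃ k : ℕ, ∃ z ∈ R, α ^ k • y = α ^ m • z}
    mul_mem' := ?_
    one_mem' := ?_
    add_mem' := ?_
    zero_mem' := ?_
    algebraMap_mem' := ?_ }, rfl, ?_, ?_⟩
  · rintro x y ⟨k, z, hz, hk⟩ ⟨k', z', hz', hk'⟩
    refine ⟨k + k', α ^ m • (z * z'), R.smul_mem (R.mul_mem hz hz') _, ?_⟩
    calc α ^ (k + k') • (x * y) = (α ^ k • x) * (α ^ k' • y) := by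
          rw [smul_mul_assoc, mul_smul_comm, smul_smul, ← pow_add]
      _ = (α ^ m • z) * (α ^ m • z') := by rw [hk, hk']
      _ = α ^ m • (α ^ m • (z * z')) := by rw [smul_mul_assoc, mul_smul_comm]
  · exact ⟨m, 1, R.one_mem, rfl⟩
  · rintro x y ⟨k, z, hz, hk⟩ ⟨k', z', hz', hk'⟩
    refine ⟨k + k', α ^ k' • z + α ^ k • z',
      R.add_mem (R.smul_mem hz _) (R.smul_mem hz' _), ?_⟩
    have e1 : α ^ (k + k') • x = α ^ m • (α ^ k' • z) := by
      rw [add_comm, pow_add, mul_smul, hk, smul_comm]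
    have e2 : α ^ (k + k') • y = α ^ m • (α ^ k • z') := by
      rw [pow_add, mul_smul, hk', smul_comm]
    rw [smul_add, smul_add, e1, e2]
  · exact ⟨0, 0, R.zero_mem, by simp⟩
  · intro c
    exact ⟨m, algebraMap Λ E c, R.algebraMap_mem c, rfl⟩
  · intro z hz
    exact ⟨m, z, hz, rfl⟩
  · -- chain of submodules C k = {y | α^k • y ∈ R}
    set C : ℕ →o Submodule Λ E :=
      ⟨fun k => (Subalgebra.toSubmodule R).comap (LinearMap.lsmul Λ E (α ^ k)),
        by
          intro a b hab y hy
          simp only [Submodule.mem_comap, LinearMap.lsmul_apply] at hy ⊢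
          have : α ^ b • y = α ^ (b - a) • (α ^ a • y) := by
            rw [smul_smul, ← pow_add, Nat.sub_add_cancel hab]
          rw [this]
          exact Submodule.smul_mem _ _ hy⟩
    obtain ⟨N, hN⟩ := monotone_stabilizes_iff_noetherian.mpr inferInstance C
    refine ⟨N, ?_⟩
    rintro y ⟨k, z, hz, hk⟩
    have hyk : y ∈ C k := by
      simp only [C, OrderHom.coe_mk, Submodule.mem_comap, LinearMap.lsmul_apply, hk]
      show α ^ k • y ∈ R; rw [hk]; exact R.smul_mem hz _
    have hyN : y ∈ C N := by
      rcases le_total k N with h | h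
      · exact C.monotone h hyk
      · rw [hN k h]; exact hyk
    exact hyN
end

section
/- Let Λ be a commutative noetherian ring, H a finitely generated Λ-module, R the image of a Λ-algebra homomorphism into End_Λ(H), and α ∈ Λ. Suppose x ∈ R satisfies x·H ⊆ α·H. Then x lies in the radical of the ideal αR of R; that is, some power of x lies in αR. -/
/-- `Λ` commutative noetherian, `H` a f.g. `Λ`-module, `R` a `Λ`-subalgebra
of `End_Λ(H)` (the image of a `Λ`-algebra map into `End_Λ(H)`), `α ∈ Λ`, and `x ∈ R`
with `x·H ⊆ α·H`.  Then some positive power of `x` lies in `αR`. -/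
theorem stmt2 (Λ : Type*) [CommRing Λ] [IsNoetherianRing Λ]
    (H : Type*) [AddCommGroup H] [Module Λ H] [Module.Finite Λ H]
    (R : Subalgebra Λ (Module.End Λ H)) (α : Λ)
    (x : Module.End Λ H) (hx : x ∈ R)
    (hxH : ∀ h : H, ∃ h' : H, x h = α • h') :
    ∃ n : ℕ, 0 < n ∧ ∃ z ∈ R, x ^ n = α • z := by
  classical
  obtain ⟨p, hmonic, -, hcoeff, heval⟩ :=
    LinearMap.exists_monic_and_coeff_mem_pow_and_aeval_eq_zero_of_range_le_smul Λ x
      (Ideal.span {α}) (by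
        rintro _ ⟨h, rfl⟩
        obtain ⟨h', hh'⟩ := hxH h
        rw [hh']
        exact Submodule.smul_mem_smul (Ideal.mem_span_singleton_self α) trivial)
  set n := p.natDegree with hn
  -- expand the characteristic polynomial identity
  have h2 : x ^ n + ∑ i ∈ Finset.range n, p.coeff i • x ^ i = 0 := by
    rw [← heval]
    conv_rhs => rw [hmonic.as_sum]
    simp [Algebra.smul_def, hn]
  -- each lower coefficient is divisible by α
  choose b hb using fun (i : ℕ) (hi : i < n) =>
    Ideal.mem_span_singleton'.mp
      (Ideal.pow_le_self (Nat.sub_ne_zero_of_lt hi) (hcoeff i))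
  set b' : ℕ → Λ := fun i => if h : i < n then b i h else 0 with hb'def
  have hb' : ∀ i < n, b' i * α = p.coeff i := by
    intro i hi
    simp only [hb'def, dif_pos hi]
    exact hb i hi
  set z0 : Module.End Λ H := ∑ i ∈ Finset.range n, (-(b' i)) • x ^ i with hz0
  have hz0R : z0 ∈ R :=
    Subalgebra.sum_mem R fun i _ => Subalgebra.smul_mem R (Subalgebra.pow_mem R hx _) _
  have hpow : x ^ n = α • z0 := by
    have h3 : x ^ n = -∑ i ∈ Finset.range n, p.coeff i • x ^ i :=
      eq_neg_of_add_eq_zero_left h2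
    rw [h3, hz0, Finset.smul_sum, ← Finset.sum_neg_distrib]
    refine Finset.sum_congr rfl fun i hi => ?_
    rw [smul_smul, mul_neg, neg_smul, ← neg_smul, mul_comm, hb' i (Finset.mem_range.mp hi),
      neg_smul]
  exact ⟨n + 1, Nat.succ_pos n, x * z0, R.mul_mem hx hz0R, by
    rw [pow_succ', hpow, mul_smul_comm]⟩
end
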